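/- For any n ≥ m+1, any x_0, …, x_n ∈ ℝ, any ρ, ρ' ∈ ℝ and any t ∈ A_{n,m}, writing w = x − ρBx and w' = x − ρ'Bx, one has |J_n(w', t) − J_n(w, t)| ≤ (2|ρ − ρ'|/n) ‖Bx‖ (|ρ + ρ'| ‖Bx‖ + 2‖x‖). -/

import Mathlib

open MeasureTheory ProbabilityTheory Filter
open scoped RealInnerProductSpace

noncomputable section

/-- `X n = O_P(a n)`: for every `ε > 0` there are `M > 0` and `N` such that
`P(|X n| > M * a n) ≤ ε` for all `n ≥ N`. -/
def IsBigOP {Ω : Type*} [MeasurableSpace Ω] (P : Measure Ω)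
    (X : ℕ → Ω → ℝ) (a : ℕ → ℝ) : Prop :=
  ∀ ε : ℝ, 0 < ε → ∃ M : ℝ, 0 < M ∧ ∃ N : ℕ, ∀ n, N ≤ n →
    (P {ω | M * a n < |X n ω|}).toReal ≤ ε

/-- `A_{n,m}`: admissible change-point configurations
`0 = t_0 < t_1 < ⋯ < t_m < t_{m+1} = n`. -/
def Anm (n m : ℕ) : Set (Fin (m + 2) → ℕ) :=
  {t | t 0 = 0 ∧ t (Fin.last (m + 1)) = n ∧ StrictMono t}

/-- the indicator vector of the `k`-th segment `(t_k, t_{k+1}]` (coordinates `1,…,n`). -/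
def segVec (n m : ℕ) (t : Fin (m + 2) → ℕ) (k : Fin (m + 1)) :
    EuclideanSpace ℝ (Fin n) :=
  WithLp.toLp 2 (fun i => if t k.castSucc < (i : ℕ) + 1 ∧ (i : ℕ) + 1 ≤ t k.succ then 1 else 0)

/-- the linear span `E_t` of the segment indicator vectors. -/
def Esp (n m : ℕ) (t : Fin (m + 2) → ℕ) : Submodule ℝ (EuclideanSpace ℝ (Fin n)) :=
  Submodule.span ℝ (Set.range (segVec n m t))

/-- orthogonal projection `π_{E_t}` of `ℝⁿ` onto `E_t`. -/
def projE (n m : ℕ) (t : Fin (m + 2) → ℕ) (x : EuclideanSpace ℝ (Fin n)) :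
    EuclideanSpace ℝ (Fin n) :=
  ((Esp n m t).orthogonalProjectionOnto x : EuclideanSpace ℝ (Fin n))

/-- `x = (x_1, …, x_n)`. -/
def vecOf (n : ℕ) (x : ℕ → ℝ) : EuclideanSpace ℝ (Fin n) :=
  WithLp.toLp 2 (fun i => x ((i : ℕ) + 1))

/-- `Bx = (x_0, …, x_{n-1})`. -/
def bvecOf (n : ℕ) (x : ℕ → ℝ) : EuclideanSpace ℝ (Fin n) :=
  WithLp.toLp 2 (fun i => x (i : ℕ))

/-- the decorrelated vector `x - ρ Bx`. -/
def decor (n : ℕ) (x : ℕ → ℝ) (r : ℝ) : EuclideanSpace ℝ (Fin n) :=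
  vecOf n x - r • bvecOf n x

/-- `J_n(x, t) = (1/n)(‖π_{E_{t*}} x‖² - ‖π_{E_t} x‖²)`. -/
def Jn (n m : ℕ) (tstar t : Fin (m + 2) → ℕ) (x : EuclideanSpace ℝ (Fin n)) : ℝ :=
  (‖projE n m tstar x‖ ^ 2 - ‖projE n m t x‖ ^ 2) / n

/-- `K_n(x, t) = (1/n)‖(π_{E_{t*}} - π_{E_t}) 𝔼x‖²`. -/
def Kn (n m : ℕ) (tstar t : Fin (m + 2) → ℕ) (Ex : EuclideanSpace ℝ (Fin n)) : ℝ :=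
  ‖projE n m tstar Ex - projE n m t Ex‖ ^ 2 / n

/-- `V_n(x, t)`. -/
def Vn (n m : ℕ) (tstar t : Fin (m + 2) → ℕ) (x Ex : EuclideanSpace ℝ (Fin n)) : ℝ :=
  (‖projE n m tstar (x - Ex)‖ ^ 2 - ‖projE n m t (x - Ex)‖ ^ 2) / n

/-- `W_n(x, t)`. -/
def Wn (n m : ℕ) (tstar t : Fin (m + 2) → ℕ) (x Ex : EuclideanSpace ℝ (Fin n)) : ℝ :=
  2 * (⟪projE n m tstar (x - Ex), projE n m tstar Ex⟫ -
       ⟪projE n m t (x - Ex), projE n m t Ex⟫) / n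

/-- `C'_{ν,γ,n,m}(I)`: admissible configurations `t` with
`ν λ̲⁻² ≤ ‖t - t*‖ ≤ n γ Δ_{τ*}`, `t_k ≥ t*_k` for all `k`,
`ν λ̲⁻² ≤ t_k - t*_k ≤ n γ Δ_{τ*}` for `k ∈ I` and `t_k - t*_k < ν λ̲⁻²` for `k ∉ I`. -/
def CprimeI (n m : ℕ) (tstar : Fin (m + 2) → ℕ) (lamb Dtau ν γ : ℝ)
    (I : Set (Fin m)) : Set (Fin (m + 2) → ℕ) :=
  {t | t ∈ Anm n m ∧
    ν / lamb ^ 2 ≤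
      Real.sqrt (∑ k : Fin m,
        ((t k.castSucc.succ : ℝ) - (tstar k.castSucc.succ : ℝ)) ^ 2) ∧
    Real.sqrt (∑ k : Fin m,
        ((t k.castSucc.succ : ℝ) - (tstar k.castSucc.succ : ℝ)) ^ 2) ≤ n * γ * Dtau ∧
    (∀ k : Fin m, tstar k.castSucc.succ ≤ t k.castSucc.succ) ∧
    (∀ k : Fin m, k ∈ I →
      ν / lamb ^ 2 ≤ (t k.castSucc.succ : ℝ) - (tstar k.castSucc.succ : ℝ) ∧
      (t k.castSucc.succ : ℝ) - (tstar k.castSucc.succ : ℝ) ≤ n * γ * Dtau) ∧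
    (∀ k : Fin m, k ∉ I →
      (t k.castSucc.succ : ℝ) - (tstar k.castSucc.succ : ℝ) < ν / lamb ^ 2)}

/-!
Writing `w' - w = (ρ - ρ') Bx` and `w' + w = 2x - (ρ + ρ') Bx`, each of the two squared
projection norms in `J_n` changes by `⟪π(w' - w), π(w' + w)⟫`, which Cauchy–Schwarz and
`‖π‖ ≤ 1` bound by `‖w' - w‖ ‖w' + w‖`.
-/

theorem norm_sq_sub_norm_sq_eq_inner {F : Type*} [NormedAddCommGroup F] [InnerProductSpace ℝ F]
    (a b : F) : ‖a‖ ^ 2 - ‖b‖ ^ 2 = ⟪a - b, a + b⟫ := by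
  rw [inner_sub_left, inner_add_right, inner_add_right, real_inner_self_eq_norm_sq,
    real_inner_self_eq_norm_sq, real_inner_comm a b]
  ring

theorem abs_norm_map_sq_sub_norm_map_sq_le {E F : Type*} [SeminormedAddCommGroup E]
    [NormedSpace ℝ E] [NormedAddCommGroup F] [InnerProductSpace ℝ F] (f : E →ₗ[ℝ] F)
    (hf : ∀ v, ‖f v‖ ≤ ‖v‖) (w w' : E) :
    |‖f w'‖ ^ 2 - ‖f w‖ ^ 2| ≤ ‖w' - w‖ * ‖w' + w‖ := by
  rw [norm_sq_sub_norm_sq_eq_inner, ← map_sub, ← map_add]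
  calc |⟪f (w' - w), f (w' + w)⟫| ≤ ‖f (w' - w)‖ * ‖f (w' + w)‖ := abs_real_inner_le_norm _ _
    _ ≤ ‖w' - w‖ * ‖w' + w‖ := mul_le_mul (hf _) (hf _) (norm_nonneg _) (norm_nonneg _)

theorem abs_norm_projE_sq_sub_le (n m : ℕ) (t : Fin (m + 2) → ℕ)
    (w w' : EuclideanSpace ℝ (Fin n)) :
    |‖projE n m t w'‖ ^ 2 - ‖projE n m t w‖ ^ 2| ≤ ‖w' - w‖ * ‖w' + w‖ :=
  abs_norm_map_sq_sub_norm_map_sq_le ((Esp n m t).subtypeL.comp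
    (Esp n m t).orthogonalProjectionOnto).toLinearMap
    (Esp n m t).norm_orthogonalProjectionOnto_apply_le w w'

theorem abs_Jn_sub_Jn_le (n m : ℕ) (tstar t : Fin (m + 2) → ℕ)
    (w w' : EuclideanSpace ℝ (Fin n)) :
    |Jn n m tstar t w' - Jn n m tstar t w| ≤ 2 * (‖w' - w‖ * ‖w' + w‖) / n := by
  rw [Jn, Jn, div_sub_div_same, abs_div, Nat.abs_cast]
  gcongr
  calc _ = |(‖projE n m tstar w'‖ ^ 2 - ‖projE n m tstar w‖ ^ 2) -
          (‖projE n m t w'‖ ^ 2 - ‖projE n m t w‖ ^ 2)| := by ring_nf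
    _ ≤ |‖projE n m tstar w'‖ ^ 2 - ‖projE n m tstar w‖ ^ 2| +
          |‖projE n m t w'‖ ^ 2 - ‖projE n m t w‖ ^ 2| := abs_sub _ _
    _ ≤ 2 * (‖w' - w‖ * ‖w' + w‖) := by
        linarith [abs_norm_projE_sq_sub_le n m tstar w w', abs_norm_projE_sq_sub_le n m t w w']

theorem decor_sub_decor (n : ℕ) (x : ℕ → ℝ) (ρ ρ' : ℝ) :
    decor n x ρ' - decor n x ρ = (ρ - ρ') • bvecOf n x := by
  simp only [decor]
  module

theorem norm_decor_add_decor_le (n : ℕ) (x : ℕ → ℝ) (ρ ρ' : ℝ) :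
    ‖decor n x ρ' + decor n x ρ‖ ≤ |ρ + ρ'| * ‖bvecOf n x‖ + 2 * ‖vecOf n x‖ := by
  have hsum : decor n x ρ' + decor n x ρ = (2 : ℝ) • vecOf n x - (ρ + ρ') • bvecOf n x := by
    simp only [decor]
    module
  calc _ ≤ ‖(2 : ℝ) • vecOf n x‖ + ‖(ρ + ρ') • bvecOf n x‖ := hsum ▸ norm_sub_le _ _
    _ = _ := by rw [norm_smul, norm_smul, Real.norm_two, Real.norm_eq_abs, add_comm]

theorem stmt_3_general (m n : ℕ)
    (tstar : Fin (m + 2) → ℕ)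
    (x : ℕ → ℝ) (ρ ρ' : ℝ)
    (t : Fin (m + 2) → ℕ) :
    |Jn n m tstar t (decor n x ρ') - Jn n m tstar t (decor n x ρ)| ≤
      2 * |ρ - ρ'| / n * ‖bvecOf n x‖ *
        (|ρ + ρ'| * ‖bvecOf n x‖ + 2 * ‖vecOf n x‖) := by
  calc _ ≤ 2 * (‖decor n x ρ' - decor n x ρ‖ * ‖decor n x ρ' + decor n x ρ‖) / n :=
        abs_Jn_sub_Jn_le n m tstar t _ _
    _ ≤ 2 * (|ρ - ρ'| * ‖bvecOf n x‖ *
          (|ρ + ρ'| * ‖bvecOf n x‖ + 2 * ‖vecOf n x‖)) / n := by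
        rw [decor_sub_decor, norm_smul, Real.norm_eq_abs]
        gcongr
        exact norm_decor_add_decor_le n x ρ ρ'
    _ = _ := by ring

theorem stmt_3 (m n : ℕ) (hm : 1 ≤ m) (hn : m + 1 ≤ n)
    (tstar : Fin (m + 2) → ℕ) (htstar : tstar ∈ Anm n m)
    (x : ℕ → ℝ) (ρ ρ' : ℝ)
    (t : Fin (m + 2) → ℕ) (ht : t ∈ Anm n m) :
    |Jn n m tstar t (decor n x ρ') - Jn n m tstar t (decor n x ρ)| ≤
      2 * |ρ - ρ'| / n * ‖bvecOf n x‖ *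
        (|ρ + ρ'| * ‖bvecOf n x‖ + 2 * ‖vecOf n x‖) :=
  stmt_3_general m n tstar x ρ ρ' t
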